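/- If F is a smooth 2-form field on ℝ⁴ that is pointwise self-dual (★F(x) = F(x) for all x), then d*dF = ★(dd*F); that is, for all a, b and all x, (d*(dF))_{ab}(x) = (1/2) Σ_{c,d} ε(a,b,c,d) · (d(d*F))_{cd}(x). -/

import Mathlib

open scoped BigOperators
open Matrix

/-- The Levi-Civita symbol on `Fin 4`: the sign of the permutation sending
`(0,1,2,3)` to `(a,b,c,d)` when the indices are pairwise distinct, `0` otherwise. -/
noncomputable def leviCivita (a b c d : Fin 4) : ℝ :=
  if h : Function.Bijective ![a, b, c, d] then
    ((Equiv.Perm.sign (Equiv.ofBijective _ h) : ℤ) : ℝ)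
  else 0

/-- The Hodge star of a 2-form (antisymmetric 4×4 matrix). -/
noncomputable def hodge (F : Matrix (Fin 4) (Fin 4) ℝ) : Matrix (Fin 4) (Fin 4) ℝ :=
  fun a b => (1 / 2) * ∑ c, ∑ d, leviCivita a b c d * F c d

/-- Partial derivative in the `a`-th coordinate direction of Euclidean `ℝ⁴`. -/
noncomputable def pd (a : Fin 4) (f : (Fin 4 → ℝ) → ℝ) (x : Fin 4 → ℝ) : ℝ :=
  fderiv ℝ f x (Pi.single a 1)

/-- The codifferential of a 2-form field: `(d*F)_a = -Σ_b ∂_b F_{ba}`. -/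
noncomputable def codiff (F : (Fin 4 → ℝ) → Matrix (Fin 4) (Fin 4) ℝ)
    (a : Fin 4) (x : Fin 4 → ℝ) : ℝ :=
  -∑ b, pd b (fun y => F y b a) x

/-- The exterior derivative of a 2-form field:
`(dF)_{abc} = ∂_a F_{bc} + ∂_b F_{ca} + ∂_c F_{ab}`. -/
noncomputable def extd2 (F : (Fin 4 → ℝ) → Matrix (Fin 4) (Fin 4) ℝ)
    (a b c : Fin 4) (x : Fin 4 → ℝ) : ℝ :=
  pd a (fun y => F y b c) x + pd b (fun y => F y c a) x + pd c (fun y => F y a b) x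

/-- The exterior derivative of a 1-form field: `(dj)_{ab} = ∂_a j_b - ∂_b j_a`. -/
noncomputable def extd1 (j : Fin 4 → (Fin 4 → ℝ) → ℝ) (a b : Fin 4) (x : Fin 4 → ℝ) : ℝ :=
  pd a (j b) x - pd b (j a) x

/-- The codifferential of a 3-form field: `(d*G)_{ab} = -Σ_c ∂_c G_{cab}`. -/
noncomputable def codiff3 (G : Fin 4 → Fin 4 → Fin 4 → (Fin 4 → ℝ) → ℝ)
    (a b : Fin 4) (x : Fin 4 → ℝ) : ℝ :=
  -∑ c, pd c (G c a b) x


lemma lc_eq_sign (a b c d : Fin 4) (σ : Equiv.Perm (Fin 4)) (h : ![a, b, c, d] = ⇑σ) :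
    leviCivita a b c d = ((Equiv.Perm.sign σ : ℤ) : ℝ) := by
  have hb : Function.Bijective ![a, b, c, d] := h ▸ σ.bijective
  have he : Equiv.ofBijective _ hb = σ :=
    Equiv.ext fun i => by rw [Equiv.ofBijective_apply]; exact congrFun h i
  rw [leviCivita, dif_pos hb, he]

lemma lc0123 : leviCivita 0 1 2 3 = 1 := by
  rw [lc_eq_sign 0 1 2 3 (Equiv.mk ![0, 1, 2, 3] ![0, 1, 2, 3] (by decide) (by decide)) rfl]
  rw [show Equiv.Perm.sign (Equiv.mk ![0, 1, 2, 3] ![0, 1, 2, 3] (by decide) (by decide) : Equiv.Perm (Fin 4)) = 1 from by decide]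
  norm_num

lemma lc0132 : leviCivita 0 1 3 2 = -1 := by
  rw [lc_eq_sign 0 1 3 2 (Equiv.mk ![0, 1, 3, 2] ![0, 1, 3, 2] (by decide) (by decide)) rfl]
  rw [show Equiv.Perm.sign (Equiv.mk ![0, 1, 3, 2] ![0, 1, 3, 2] (by decide) (by decide) : Equiv.Perm (Fin 4)) = -1 from by decide]
  norm_num

lemma lc0213 : leviCivita 0 2 1 3 = -1 := by
  rw [lc_eq_sign 0 2 1 3 (Equiv.mk ![0, 2, 1, 3] ![0, 2, 1, 3] (by decide) (by decide)) rfl]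
  rw [show Equiv.Perm.sign (Equiv.mk ![0, 2, 1, 3] ![0, 2, 1, 3] (by decide) (by decide) : Equiv.Perm (Fin 4)) = -1 from by decide]
  norm_num

lemma lc0231 : leviCivita 0 2 3 1 = 1 := by
  rw [lc_eq_sign 0 2 3 1 (Equiv.mk ![0, 2, 3, 1] ![0, 3, 1, 2] (by decide) (by decide)) rfl]
  rw [show Equiv.Perm.sign (Equiv.mk ![0, 2, 3, 1] ![0, 3, 1, 2] (by decide) (by decide) : Equiv.Perm (Fin 4)) = 1 from by decide]
  norm_num

lemma lc0312 : leviCivita 0 3 1 2 = 1 := by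
  rw [lc_eq_sign 0 3 1 2 (Equiv.mk ![0, 3, 1, 2] ![0, 2, 3, 1] (by decide) (by decide)) rfl]
  rw [show Equiv.Perm.sign (Equiv.mk ![0, 3, 1, 2] ![0, 2, 3, 1] (by decide) (by decide) : Equiv.Perm (Fin 4)) = 1 from by decide]
  norm_num

lemma lc0321 : leviCivita 0 3 2 1 = -1 := by
  rw [lc_eq_sign 0 3 2 1 (Equiv.mk ![0, 3, 2, 1] ![0, 3, 2, 1] (by decide) (by decide)) rfl]
  rw [show Equiv.Perm.sign (Equiv.mk ![0, 3, 2, 1] ![0, 3, 2, 1] (by decide) (by decide) : Equiv.Perm (Fin 4)) = -1 from by decide]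
  norm_num

lemma lc1023 : leviCivita 1 0 2 3 = -1 := by
  rw [lc_eq_sign 1 0 2 3 (Equiv.mk ![1, 0, 2, 3] ![1, 0, 2, 3] (by decide) (by decide)) rfl]
  rw [show Equiv.Perm.sign (Equiv.mk ![1, 0, 2, 3] ![1, 0, 2, 3] (by decide) (by decide) : Equiv.Perm (Fin 4)) = -1 from by decide]
  norm_num

lemma lc1032 : leviCivita 1 0 3 2 = 1 := by
  rw [lc_eq_sign 1 0 3 2 (Equiv.mk ![1, 0, 3, 2] ![1, 0, 3, 2] (by decide) (by decide)) rfl]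
  rw [show Equiv.Perm.sign (Equiv.mk ![1, 0, 3, 2] ![1, 0, 3, 2] (by decide) (by decide) : Equiv.Perm (Fin 4)) = 1 from by decide]
  norm_num

lemma lc1203 : leviCivita 1 2 0 3 = 1 := by
  rw [lc_eq_sign 1 2 0 3 (Equiv.mk ![1, 2, 0, 3] ![2, 0, 1, 3] (by decide) (by decide)) rfl]
  rw [show Equiv.Perm.sign (Equiv.mk ![1, 2, 0, 3] ![2, 0, 1, 3] (by decide) (by decide) : Equiv.Perm (Fin 4)) = 1 from by decide]
  norm_num

lemma lc1230 : leviCivita 1 2 3 0 = -1 := by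
  rw [lc_eq_sign 1 2 3 0 (Equiv.mk ![1, 2, 3, 0] ![3, 0, 1, 2] (by decide) (by decide)) rfl]
  rw [show Equiv.Perm.sign (Equiv.mk ![1, 2, 3, 0] ![3, 0, 1, 2] (by decide) (by decide) : Equiv.Perm (Fin 4)) = -1 from by decide]
  norm_num

lemma lc1302 : leviCivita 1 3 0 2 = -1 := by
  rw [lc_eq_sign 1 3 0 2 (Equiv.mk ![1, 3, 0, 2] ![2, 0, 3, 1] (by decide) (by decide)) rfl]
  rw [show Equiv.Perm.sign (Equiv.mk ![1, 3, 0, 2] ![2, 0, 3, 1] (by decide) (by decide) : Equiv.Perm (Fin 4)) = -1 from by decide]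
  norm_num

lemma lc1320 : leviCivita 1 3 2 0 = 1 := by
  rw [lc_eq_sign 1 3 2 0 (Equiv.mk ![1, 3, 2, 0] ![3, 0, 2, 1] (by decide) (by decide)) rfl]
  rw [show Equiv.Perm.sign (Equiv.mk ![1, 3, 2, 0] ![3, 0, 2, 1] (by decide) (by decide) : Equiv.Perm (Fin 4)) = 1 from by decide]
  norm_num

lemma lc2013 : leviCivita 2 0 1 3 = 1 := by
  rw [lc_eq_sign 2 0 1 3 (Equiv.mk ![2, 0, 1, 3] ![1, 2, 0, 3] (by decide) (by decide)) rfl]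
  rw [show Equiv.Perm.sign (Equiv.mk ![2, 0, 1, 3] ![1, 2, 0, 3] (by decide) (by decide) : Equiv.Perm (Fin 4)) = 1 from by decide]
  norm_num

lemma lc2031 : leviCivita 2 0 3 1 = -1 := by
  rw [lc_eq_sign 2 0 3 1 (Equiv.mk ![2, 0, 3, 1] ![1, 3, 0, 2] (by decide) (by decide)) rfl]
  rw [show Equiv.Perm.sign (Equiv.mk ![2, 0, 3, 1] ![1, 3, 0, 2] (by decide) (by decide) : Equiv.Perm (Fin 4)) = -1 from by decide]
  norm_num

lemma lc2103 : leviCivita 2 1 0 3 = -1 := by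
  rw [lc_eq_sign 2 1 0 3 (Equiv.mk ![2, 1, 0, 3] ![2, 1, 0, 3] (by decide) (by decide)) rfl]
  rw [show Equiv.Perm.sign (Equiv.mk ![2, 1, 0, 3] ![2, 1, 0, 3] (by decide) (by decide) : Equiv.Perm (Fin 4)) = -1 from by decide]
  norm_num

lemma lc2130 : leviCivita 2 1 3 0 = 1 := by
  rw [lc_eq_sign 2 1 3 0 (Equiv.mk ![2, 1, 3, 0] ![3, 1, 0, 2] (by decide) (by decide)) rfl]
  rw [show Equiv.Perm.sign (Equiv.mk ![2, 1, 3, 0] ![3, 1, 0, 2] (by decide) (by decide) : Equiv.Perm (Fin 4)) = 1 from by decide]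
  norm_num

lemma lc2301 : leviCivita 2 3 0 1 = 1 := by
  rw [lc_eq_sign 2 3 0 1 (Equiv.mk ![2, 3, 0, 1] ![2, 3, 0, 1] (by decide) (by decide)) rfl]
  rw [show Equiv.Perm.sign (Equiv.mk ![2, 3, 0, 1] ![2, 3, 0, 1] (by decide) (by decide) : Equiv.Perm (Fin 4)) = 1 from by decide]
  norm_num

lemma lc2310 : leviCivita 2 3 1 0 = -1 := by
  rw [lc_eq_sign 2 3 1 0 (Equiv.mk ![2, 3, 1, 0] ![3, 2, 0, 1] (by decide) (by decide)) rfl]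
  rw [show Equiv.Perm.sign (Equiv.mk ![2, 3, 1, 0] ![3, 2, 0, 1] (by decide) (by decide) : Equiv.Perm (Fin 4)) = -1 from by decide]
  norm_num

lemma lc3012 : leviCivita 3 0 1 2 = -1 := by
  rw [lc_eq_sign 3 0 1 2 (Equiv.mk ![3, 0, 1, 2] ![1, 2, 3, 0] (by decide) (by decide)) rfl]
  rw [show Equiv.Perm.sign (Equiv.mk ![3, 0, 1, 2] ![1, 2, 3, 0] (by decide) (by decide) : Equiv.Perm (Fin 4)) = -1 from by decide]
  norm_num

lemma lc3021 : leviCivita 3 0 2 1 = 1 := by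
  rw [lc_eq_sign 3 0 2 1 (Equiv.mk ![3, 0, 2, 1] ![1, 3, 2, 0] (by decide) (by decide)) rfl]
  rw [show Equiv.Perm.sign (Equiv.mk ![3, 0, 2, 1] ![1, 3, 2, 0] (by decide) (by decide) : Equiv.Perm (Fin 4)) = 1 from by decide]
  norm_num

lemma lc3102 : leviCivita 3 1 0 2 = 1 := by
  rw [lc_eq_sign 3 1 0 2 (Equiv.mk ![3, 1, 0, 2] ![2, 1, 3, 0] (by decide) (by decide)) rfl]
  rw [show Equiv.Perm.sign (Equiv.mk ![3, 1, 0, 2] ![2, 1, 3, 0] (by decide) (by decide) : Equiv.Perm (Fin 4)) = 1 from by decide]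
  norm_num

lemma lc3120 : leviCivita 3 1 2 0 = -1 := by
  rw [lc_eq_sign 3 1 2 0 (Equiv.mk ![3, 1, 2, 0] ![3, 1, 2, 0] (by decide) (by decide)) rfl]
  rw [show Equiv.Perm.sign (Equiv.mk ![3, 1, 2, 0] ![3, 1, 2, 0] (by decide) (by decide) : Equiv.Perm (Fin 4)) = -1 from by decide]
  norm_num

lemma lc3201 : leviCivita 3 2 0 1 = -1 := by
  rw [lc_eq_sign 3 2 0 1 (Equiv.mk ![3, 2, 0, 1] ![2, 3, 1, 0] (by decide) (by decide)) rfl]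
  rw [show Equiv.Perm.sign (Equiv.mk ![3, 2, 0, 1] ![2, 3, 1, 0] (by decide) (by decide) : Equiv.Perm (Fin 4)) = -1 from by decide]
  norm_num

lemma lc3210 : leviCivita 3 2 1 0 = 1 := by
  rw [lc_eq_sign 3 2 1 0 (Equiv.mk ![3, 2, 1, 0] ![3, 2, 1, 0] (by decide) (by decide)) rfl]
  rw [show Equiv.Perm.sign (Equiv.mk ![3, 2, 1, 0] ![3, 2, 1, 0] (by decide) (by decide) : Equiv.Perm (Fin 4)) = 1 from by decide]
  norm_num

lemma lc_dup01 (a c d : Fin 4) : leviCivita a a c d = 0 := by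
  rw [leviCivita, dif_neg]
  intro h
  exact absurd (h.injective (show ![a, a, c, d] 0 = ![a, a, c, d] 1 from rfl)) (by decide)

lemma lc_dup02 (a b d : Fin 4) : leviCivita a b a d = 0 := by
  rw [leviCivita, dif_neg]
  intro h
  exact absurd (h.injective (show ![a, b, a, d] 0 = ![a, b, a, d] 2 from rfl)) (by decide)

lemma lc_dup03 (a b c : Fin 4) : leviCivita a b c a = 0 := by
  rw [leviCivita, dif_neg]
  intro h
  exact absurd (h.injective (show ![a, b, c, a] 0 = ![a, b, c, a] 3 from rfl)) (by decide)

lemma lc_dup12 (a b d : Fin 4) : leviCivita a b b d = 0 := by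
  rw [leviCivita, dif_neg]
  intro h
  exact absurd (h.injective (show ![a, b, b, d] 1 = ![a, b, b, d] 2 from rfl)) (by decide)

lemma lc_dup13 (a b c : Fin 4) : leviCivita a b c b = 0 := by
  rw [leviCivita, dif_neg]
  intro h
  exact absurd (h.injective (show ![a, b, c, b] 1 = ![a, b, c, b] 3 from rfl)) (by decide)

lemma lc_dup23 (a b c : Fin 4) : leviCivita a b c c = 0 := by
  rw [leviCivita, dif_neg]
  intro h
  exact absurd (h.injective (show ![a, b, c, c] 2 = ![a, b, c, c] 3 from rfl)) (by decide)

-- LCLIST: lc0123, lc0132, lc0213, lc0231, lc0312, lc0321, lc1023, lc1032, lc1203, lc1230, lc1302, lc1320, lc2013, lc2031, lc2103, lc2130, lc2301, lc2310, lc3012, lc3021, lc3102, lc3120, lc3201, lc3210, lc_dup01, lc_dup02, lc_dup03, lc_dup12, lc_dup13, lc_dup23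

lemma pd_smooth (f : (Fin 4 → ℝ) → ℝ) (hf : ContDiff ℝ (⊤ : ℕ∞) f) (a : Fin 4) :
    ContDiff ℝ (⊤ : ℕ∞) (pd a f) := by
  unfold pd
  exact (hf.fderiv_right (by simp)).clm_apply contDiff_const

lemma pd_diffAt (f : (Fin 4 → ℝ) → ℝ) (hf : ContDiff ℝ (⊤ : ℕ∞) f) (a : Fin 4) (x : Fin 4 → ℝ) :
    DifferentiableAt ℝ (pd a f) x :=
  ((pd_smooth f hf a).differentiable (by simp)).differentiableAt

lemma pd_neg' (f : (Fin 4 → ℝ) → ℝ) (a : Fin 4) (x : Fin 4 → ℝ) :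
    pd a (fun y => -f y) x = -pd a f x := by
  unfold pd; rw [fderiv_fun_neg]; rfl

lemma pd_const (a : Fin 4) (x : Fin 4 → ℝ) : pd a (fun _ => (0:ℝ)) x = 0 := by
  unfold pd; rw [fderiv_fun_const]; rfl

lemma pd_add3 (f g h : (Fin 4 → ℝ) → ℝ) (a : Fin 4) (x : Fin 4 → ℝ)
    (hf : DifferentiableAt ℝ f x) (hg : DifferentiableAt ℝ g x) (hh : DifferentiableAt ℝ h x) :
    pd a (fun y => f y + g y + h y) x = pd a f x + pd a g x + pd a h x := by
  unfold pd; rw [fderiv_fun_add (hf.fun_add hg) hh, fderiv_fun_add hf hg]; rfl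

lemma pd_add4 (f g h k : (Fin 4 → ℝ) → ℝ) (a : Fin 4) (x : Fin 4 → ℝ)
    (hf : DifferentiableAt ℝ f x) (hg : DifferentiableAt ℝ g x)
    (hh : DifferentiableAt ℝ h x) (hk : DifferentiableAt ℝ k x) :
    pd a (fun y => f y + g y + h y + k y) x = pd a f x + pd a g x + pd a h x + pd a k x := by
  unfold pd
  rw [fderiv_fun_add ((hf.fun_add hg).fun_add hh) hk, fderiv_fun_add (hf.fun_add hg) hh, fderiv_fun_add hf hg]; rfl

lemma pd_comm (f : (Fin 4 → ℝ) → ℝ) (hf : ContDiff ℝ (⊤ : ℕ∞) f) (a b : Fin 4) (x : Fin 4 → ℝ) :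
    pd a (pd b f) x = pd b (pd a f) x := by
  unfold pd
  have hs : IsSymmSndFDerivAt ℝ f x := hf.contDiffAt.isSymmSndFDerivAt (n := (⊤ : ℕ∞)) (by rw [minSmoothness_of_isRCLikeNormedField]; exact WithTop.coe_le_coe.mpr le_top)
  have h1 : ∀ v w : Fin 4 → ℝ, fderiv ℝ (fun y => fderiv ℝ f y v) x w
      = fderiv ℝ (fderiv ℝ f) x w v := by
    intro v w
    rw [fderiv_clm_apply (((hf.fderiv_right (m := (⊤ : ℕ∞)) (by simp)).differentiable (by simp)).differentiableAt)
      (differentiableAt_const _)]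
    simp
  rw [h1, h1, hs.eq]

/-- Second partial derivatives of the components of `F`. -/
noncomputable def DD (F : (Fin 4 → ℝ) → Matrix (Fin 4) (Fin 4) ℝ) (x : Fin 4 → ℝ)
    (c e i j : Fin 4) : ℝ :=
  pd c (pd e fun z => F z i j) x

section Main
variable (F : (Fin 4 → ℝ) → Matrix (Fin 4) (Fin 4) ℝ)

lemma DD_symm (hsmooth : ∀ a b, ContDiff ℝ (⊤ : ℕ∞) fun x => F x a b) (x : Fin 4 → ℝ) (c e : Fin 4) :
    ∀ i j, DD F x c e i j = DD F x e c i j := fun i j =>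
  pd_comm _ (hsmooth i j) c e x

lemma DD_pospair (x : Fin 4 → ℝ) (i j i' j' : Fin 4)
    (hfun : (fun z => F z i j) = fun z => F z i' j') (c e : Fin 4) :
    DD F x c e i j = DD F x c e i' j' := by
  unfold DD; rw [hfun]

lemma DD_negpair (x : Fin 4 → ℝ) (i j i' j' : Fin 4)
    (hfun : (fun z => F z i j) = fun z => -F z i' j') (c e : Fin 4) :
    DD F x c e i j = -DD F x c e i' j' := by
  unfold DD
  rw [hfun]
  have h2 : pd e (fun z => -F z i' j') = fun y => -pd e (fun z => F z i' j') y :=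
    funext fun y => pd_neg' _ e y
  rw [h2, pd_neg']

lemma Fanti (hanti : ∀ x, (F x)ᵀ = -(F x)) (i j : Fin 4) :
    (fun z => F z j i) = fun z => -F z i j := by
  funext z
  have h := congrFun (congrFun (hanti z) i) j
  simpa [Matrix.transpose_apply, Matrix.neg_apply] using h

lemma DD_ii (hanti : ∀ x, (F x)ᵀ = -(F x)) (x : Fin 4 → ℝ) (c e i : Fin 4) :
    DD F x c e i i = 0 := by
  have h0 : (fun z => F z i i) = fun _ => (0:ℝ) := by
    funext z
    have h := congrFun (congrFun (hanti z) i) i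
    simp only [Matrix.transpose_apply, Matrix.neg_apply] at h
    linarith
  unfold DD
  rw [h0]
  have h2 : pd e (fun _ => (0:ℝ)) = fun _ => (0:ℝ) := funext fun y => pd_const e y
  rw [h2, pd_const]

lemma Fsd01 (hanti : ∀ x, (F x)ᵀ = -(F x)) (hsd : ∀ x, hodge (F x) = F x) :
    (fun z => F z 2 3) = fun z => F z 0 1 := by
  funext z
  have h := congrFun (congrFun (hsd z) 0) 1
  have ha := congrFun (Fanti F hanti 2 3) z
  simp only [hodge, Fin.sum_univ_four, lc0123, lc0132, lc_dup01, lc_dup02, lc_dup03,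
    lc_dup12, lc_dup13, lc_dup23] at h
  have ha : F z 3 2 = -F z 2 3 := ha
  linarith

lemma Fsd02 (hanti : ∀ x, (F x)ᵀ = -(F x)) (hsd : ∀ x, hodge (F x) = F x) :
    (fun z => F z 1 3) = fun z => -F z 0 2 := by
  funext z
  have h := congrFun (congrFun (hsd z) 0) 2
  have ha := congrFun (Fanti F hanti 1 3) z
  simp only [hodge, Fin.sum_univ_four, lc0213, lc0231, lc_dup01, lc_dup02, lc_dup03,
    lc_dup12, lc_dup13, lc_dup23] at h
  have ha : F z 3 1 = -F z 1 3 := ha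
  linarith

lemma Fsd03 (hanti : ∀ x, (F x)ᵀ = -(F x)) (hsd : ∀ x, hodge (F x) = F x) :
    (fun z => F z 1 2) = fun z => F z 0 3 := by
  funext z
  have h := congrFun (congrFun (hsd z) 0) 3
  have ha := congrFun (Fanti F hanti 1 2) z
  simp only [hodge, Fin.sum_univ_four, lc0312, lc0321, lc_dup01, lc_dup02, lc_dup03,
    lc_dup12, lc_dup13, lc_dup23] at h
  have ha : F z 2 1 = -F z 1 2 := ha
  linarith

lemma pd_codiff (hsmooth : ∀ a b, ContDiff ℝ (⊤ : ℕ∞) fun x => F x a b) (c d : Fin 4) (x : Fin 4 → ℝ) :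
    pd c (codiff F d) x
      = -(DD F x c 0 0 d + DD F x c 1 1 d + DD F x c 2 2 d + DD F x c 3 3 d) := by
  have h : codiff F d = fun y => -(pd 0 (fun z => F z 0 d) y + pd 1 (fun z => F z 1 d) y
      + pd 2 (fun z => F z 2 d) y + pd 3 (fun z => F z 3 d) y) := by
    funext y
    simp [codiff, Fin.sum_univ_four]
  rw [h, pd_neg' _ c x, pd_add4 _ _ _ _ c x (pd_diffAt _ (hsmooth 0 d) 0 x)
    (pd_diffAt _ (hsmooth 1 d) 1 x) (pd_diffAt _ (hsmooth 2 d) 2 x)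
    (pd_diffAt _ (hsmooth 3 d) 3 x)]
  rfl

lemma pd_extd2' (hsmooth : ∀ a b, ContDiff ℝ (⊤ : ℕ∞) fun x => F x a b) (e c a b : Fin 4)
    (x : Fin 4 → ℝ) :
    pd e (extd2 F c a b) x = DD F x e c a b + DD F x e a b c + DD F x e b c a := by
  have h : extd2 F c a b = fun y => pd c (fun z => F z a b) y + pd a (fun z => F z b c) y
      + pd b (fun z => F z c a) y := rfl
  rw [h, pd_add3 _ _ _ e x (pd_diffAt _ (hsmooth a b) c x) (pd_diffAt _ (hsmooth b c) a x)
    (pd_diffAt _ (hsmooth c a) b x)]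
  rfl

end Main

set_option maxHeartbeats 4000000 in
/-- For a pointwise self-dual smooth 2-form field `F` on `ℝ⁴`,
`d*dF = ★(dd*F)`. -/
theorem codiff_extd_eq_hodge_extd_codiff (F : (Fin 4 → ℝ) → Matrix (Fin 4) (Fin 4) ℝ)
    (hsmooth : ∀ a b, ContDiff ℝ (⊤ : ℕ∞) fun x => F x a b)
    (hanti : ∀ x, (F x)ᵀ = -(F x))
    (hsd : ∀ x, hodge (F x) = F x) :
    ∀ (a b : Fin 4) (x : Fin 4 → ℝ),
      codiff3 (extd2 F) a b x =
        (1 / 2) * ∑ c, ∑ d, leviCivita a b c d * extd1 (codiff F) c d x := by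
  intro a b x
  have hS01 := DD_pospair F x 2 3 0 1 (Fsd01 F hanti hsd)
  have hS02 := DD_negpair F x 1 3 0 2 (Fsd02 F hanti hsd)
  have hS03 := DD_pospair F x 1 2 0 3 (Fsd03 F hanti hsd)
  have hA01 := DD_negpair F x 1 0 0 1 (Fanti F hanti 0 1)
  have hA02 := DD_negpair F x 2 0 0 2 (Fanti F hanti 0 2)
  have hA03 := DD_negpair F x 3 0 0 3 (Fanti F hanti 0 3)
  have hA23 := DD_negpair F x 3 2 2 3 (Fanti F hanti 2 3)
  have hA13 := DD_negpair F x 3 1 1 3 (Fanti F hanti 1 3)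
  have hA12 := DD_negpair F x 2 1 1 2 (Fanti F hanti 1 2)
  have hii := DD_ii F hanti x
  have hY10 := DD_symm F hsmooth x 1 0
  have hY20 := DD_symm F hsmooth x 2 0
  have hY21 := DD_symm F hsmooth x 2 1
  have hY30 := DD_symm F hsmooth x 3 0
  have hY31 := DD_symm F hsmooth x 3 1
  have hY32 := DD_symm F hsmooth x 3 2
  have hE : ∀ c d : Fin 4, extd1 (codiff F) c d x =
      -(DD F x c 0 0 d + DD F x c 1 1 d + DD F x c 2 2 d + DD F x c 3 3 d)
        - -(DD F x d 0 0 c + DD F x d 1 1 c + DD F x d 2 2 c + DD F x d 3 3 c) := by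
    intro c d
    rw [extd1, pd_codiff F hsmooth, pd_codiff F hsmooth]
  have hE' : ∀ a b : Fin 4, (∑ c, ∑ d, leviCivita a b c d * extd1 (codiff F) c d x)
      = ∑ c, ∑ d, leviCivita a b c d *
        (-(DD F x c 0 0 d + DD F x c 1 1 d + DD F x c 2 2 d + DD F x c 3 3 d)
        - -(DD F x d 0 0 c + DD F x d 1 1 c + DD F x d 2 2 c + DD F x d 3 3 c)) := by
    intro a b
    refine Finset.sum_congr rfl fun c _ => Finset.sum_congr rfl fun d _ => ?_
    rw [hE]
  have hL : ∀ a b : Fin 4, codiff3 (extd2 F) a b x =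
      -((DD F x 0 0 a b + DD F x 0 a b 0 + DD F x 0 b 0 a)
        + (DD F x 1 1 a b + DD F x 1 a b 1 + DD F x 1 b 1 a)
        + (DD F x 2 2 a b + DD F x 2 a b 2 + DD F x 2 b 2 a)
        + (DD F x 3 3 a b + DD F x 3 a b 3 + DD F x 3 b 3 a)) := by
    intro a b
    rw [codiff3, Fin.sum_univ_four, pd_extd2' F hsmooth, pd_extd2' F hsmooth,
      pd_extd2' F hsmooth, pd_extd2' F hsmooth]
  have hc00 : codiff3 (extd2 F) 0 0 x =
      (1 / 2) * ∑ c, ∑ d, leviCivita 0 0 c d * extd1 (codiff F) c d x := by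
    rw [hL, hE']
    simp only [Fin.sum_univ_four,
        lc0123, lc0132, lc0213, lc0231, lc0312, lc0321, lc1023, lc1032, lc1203, lc1230,
        lc1302, lc1320, lc2013, lc2031, lc2103, lc2130, lc2301, lc2310, lc3012, lc3021,
        lc3102, lc3120, lc3201, lc3210, lc_dup01, lc_dup02, lc_dup03, lc_dup12, lc_dup13,
        lc_dup23, hS01, hS02, hS03, hA01, hA02, hA03, hA23, hA13, hA12, hii,
        hY10, hY20, hY21, hY30, hY31, hY32]
    ring
  have hc01 : codiff3 (extd2 F) 0 1 x =
      (1 / 2) * ∑ c, ∑ d, leviCivita 0 1 c d * extd1 (codiff F) c d x := by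
    rw [hL, hE']
    simp only [Fin.sum_univ_four,
        lc0123, lc0132, lc0213, lc0231, lc0312, lc0321, lc1023, lc1032, lc1203, lc1230,
        lc1302, lc1320, lc2013, lc2031, lc2103, lc2130, lc2301, lc2310, lc3012, lc3021,
        lc3102, lc3120, lc3201, lc3210, lc_dup01, lc_dup02, lc_dup03, lc_dup12, lc_dup13,
        lc_dup23, hS01, hS02, hS03, hA01, hA02, hA03, hA23, hA13, hA12, hii,
        hY10, hY20, hY21, hY30, hY31, hY32]
    ring
  have hc02 : codiff3 (extd2 F) 0 2 x =
      (1 / 2) * ∑ c, ∑ d, leviCivita 0 2 c d * extd1 (codiff F) c d x := by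
    rw [hL, hE']
    simp only [Fin.sum_univ_four,
        lc0123, lc0132, lc0213, lc0231, lc0312, lc0321, lc1023, lc1032, lc1203, lc1230,
        lc1302, lc1320, lc2013, lc2031, lc2103, lc2130, lc2301, lc2310, lc3012, lc3021,
        lc3102, lc3120, lc3201, lc3210, lc_dup01, lc_dup02, lc_dup03, lc_dup12, lc_dup13,
        lc_dup23, hS01, hS02, hS03, hA01, hA02, hA03, hA23, hA13, hA12, hii,
        hY10, hY20, hY21, hY30, hY31, hY32]
    ring
  have hc03 : codiff3 (extd2 F) 0 3 x =
      (1 / 2) * ∑ c, ∑ d, leviCivita 0 3 c d * extd1 (codiff F) c d x := by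
    rw [hL, hE']
    simp only [Fin.sum_univ_four,
        lc0123, lc0132, lc0213, lc0231, lc0312, lc0321, lc1023, lc1032, lc1203, lc1230,
        lc1302, lc1320, lc2013, lc2031, lc2103, lc2130, lc2301, lc2310, lc3012, lc3021,
        lc3102, lc3120, lc3201, lc3210, lc_dup01, lc_dup02, lc_dup03, lc_dup12, lc_dup13,
        lc_dup23, hS01, hS02, hS03, hA01, hA02, hA03, hA23, hA13, hA12, hii,
        hY10, hY20, hY21, hY30, hY31, hY32]
    ring
  have hc10 : codiff3 (extd2 F) 1 0 x =
      (1 / 2) * ∑ c, ∑ d, leviCivita 1 0 c d * extd1 (codiff F) c d x := by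
    rw [hL, hE']
    simp only [Fin.sum_univ_four,
        lc0123, lc0132, lc0213, lc0231, lc0312, lc0321, lc1023, lc1032, lc1203, lc1230,
        lc1302, lc1320, lc2013, lc2031, lc2103, lc2130, lc2301, lc2310, lc3012, lc3021,
        lc3102, lc3120, lc3201, lc3210, lc_dup01, lc_dup02, lc_dup03, lc_dup12, lc_dup13,
        lc_dup23, hS01, hS02, hS03, hA01, hA02, hA03, hA23, hA13, hA12, hii,
        hY10, hY20, hY21, hY30, hY31, hY32]
    ring
  have hc11 : codiff3 (extd2 F) 1 1 x =
      (1 / 2) * ∑ c, ∑ d, leviCivita 1 1 c d * extd1 (codiff F) c d x := by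
    rw [hL, hE']
    simp only [Fin.sum_univ_four,
        lc0123, lc0132, lc0213, lc0231, lc0312, lc0321, lc1023, lc1032, lc1203, lc1230,
        lc1302, lc1320, lc2013, lc2031, lc2103, lc2130, lc2301, lc2310, lc3012, lc3021,
        lc3102, lc3120, lc3201, lc3210, lc_dup01, lc_dup02, lc_dup03, lc_dup12, lc_dup13,
        lc_dup23, hS01, hS02, hS03, hA01, hA02, hA03, hA23, hA13, hA12, hii,
        hY10, hY20, hY21, hY30, hY31, hY32]
    ring
  have hc12 : codiff3 (extd2 F) 1 2 x =
      (1 / 2) * ∑ c, ∑ d, leviCivita 1 2 c d * extd1 (codiff F) c d x := by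
    rw [hL, hE']
    simp only [Fin.sum_univ_four,
        lc0123, lc0132, lc0213, lc0231, lc0312, lc0321, lc1023, lc1032, lc1203, lc1230,
        lc1302, lc1320, lc2013, lc2031, lc2103, lc2130, lc2301, lc2310, lc3012, lc3021,
        lc3102, lc3120, lc3201, lc3210, lc_dup01, lc_dup02, lc_dup03, lc_dup12, lc_dup13,
        lc_dup23, hS01, hS02, hS03, hA01, hA02, hA03, hA23, hA13, hA12, hii,
        hY10, hY20, hY21, hY30, hY31, hY32]
    ring
  have hc13 : codiff3 (extd2 F) 1 3 x =
      (1 / 2) * ∑ c, ∑ d, leviCivita 1 3 c d * extd1 (codiff F) c d x := by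
    rw [hL, hE']
    simp only [Fin.sum_univ_four,
        lc0123, lc0132, lc0213, lc0231, lc0312, lc0321, lc1023, lc1032, lc1203, lc1230,
        lc1302, lc1320, lc2013, lc2031, lc2103, lc2130, lc2301, lc2310, lc3012, lc3021,
        lc3102, lc3120, lc3201, lc3210, lc_dup01, lc_dup02, lc_dup03, lc_dup12, lc_dup13,
        lc_dup23, hS01, hS02, hS03, hA01, hA02, hA03, hA23, hA13, hA12, hii,
        hY10, hY20, hY21, hY30, hY31, hY32]
    ring
  have hc20 : codiff3 (extd2 F) 2 0 x =
      (1 / 2) * ∑ c, ∑ d, leviCivita 2 0 c d * extd1 (codiff F) c d x := by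
    rw [hL, hE']
    simp only [Fin.sum_univ_four,
        lc0123, lc0132, lc0213, lc0231, lc0312, lc0321, lc1023, lc1032, lc1203, lc1230,
        lc1302, lc1320, lc2013, lc2031, lc2103, lc2130, lc2301, lc2310, lc3012, lc3021,
        lc3102, lc3120, lc3201, lc3210, lc_dup01, lc_dup02, lc_dup03, lc_dup12, lc_dup13,
        lc_dup23, hS01, hS02, hS03, hA01, hA02, hA03, hA23, hA13, hA12, hii,
        hY10, hY20, hY21, hY30, hY31, hY32]
    ring
  have hc21 : codiff3 (extd2 F) 2 1 x =
      (1 / 2) * ∑ c, ∑ d, leviCivita 2 1 c d * extd1 (codiff F) c d x := by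
    rw [hL, hE']
    simp only [Fin.sum_univ_four,
        lc0123, lc0132, lc0213, lc0231, lc0312, lc0321, lc1023, lc1032, lc1203, lc1230,
        lc1302, lc1320, lc2013, lc2031, lc2103, lc2130, lc2301, lc2310, lc3012, lc3021,
        lc3102, lc3120, lc3201, lc3210, lc_dup01, lc_dup02, lc_dup03, lc_dup12, lc_dup13,
        lc_dup23, hS01, hS02, hS03, hA01, hA02, hA03, hA23, hA13, hA12, hii,
        hY10, hY20, hY21, hY30, hY31, hY32]
    ring
  have hc22 : codiff3 (extd2 F) 2 2 x =
      (1 / 2) * ∑ c, ∑ d, leviCivita 2 2 c d * extd1 (codiff F) c d x := by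
    rw [hL, hE']
    simp only [Fin.sum_univ_four,
        lc0123, lc0132, lc0213, lc0231, lc0312, lc0321, lc1023, lc1032, lc1203, lc1230,
        lc1302, lc1320, lc2013, lc2031, lc2103, lc2130, lc2301, lc2310, lc3012, lc3021,
        lc3102, lc3120, lc3201, lc3210, lc_dup01, lc_dup02, lc_dup03, lc_dup12, lc_dup13,
        lc_dup23, hS01, hS02, hS03, hA01, hA02, hA03, hA23, hA13, hA12, hii,
        hY10, hY20, hY21, hY30, hY31, hY32]
    ring
  have hc23 : codiff3 (extd2 F) 2 3 x =
      (1 / 2) * ∑ c, ∑ d, leviCivita 2 3 c d * extd1 (codiff F) c d x := by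
    rw [hL, hE']
    simp only [Fin.sum_univ_four,
        lc0123, lc0132, lc0213, lc0231, lc0312, lc0321, lc1023, lc1032, lc1203, lc1230,
        lc1302, lc1320, lc2013, lc2031, lc2103, lc2130, lc2301, lc2310, lc3012, lc3021,
        lc3102, lc3120, lc3201, lc3210, lc_dup01, lc_dup02, lc_dup03, lc_dup12, lc_dup13,
        lc_dup23, hS01, hS02, hS03, hA01, hA02, hA03, hA23, hA13, hA12, hii,
        hY10, hY20, hY21, hY30, hY31, hY32]
    ring
  have hc30 : codiff3 (extd2 F) 3 0 x =
      (1 / 2) * ∑ c, ∑ d, leviCivita 3 0 c d * extd1 (codiff F) c d x := by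
    rw [hL, hE']
    simp only [Fin.sum_univ_four,
        lc0123, lc0132, lc0213, lc0231, lc0312, lc0321, lc1023, lc1032, lc1203, lc1230,
        lc1302, lc1320, lc2013, lc2031, lc2103, lc2130, lc2301, lc2310, lc3012, lc3021,
        lc3102, lc3120, lc3201, lc3210, lc_dup01, lc_dup02, lc_dup03, lc_dup12, lc_dup13,
        lc_dup23, hS01, hS02, hS03, hA01, hA02, hA03, hA23, hA13, hA12, hii,
        hY10, hY20, hY21, hY30, hY31, hY32]
    ring
  have hc31 : codiff3 (extd2 F) 3 1 x =
      (1 / 2) * ∑ c, ∑ d, leviCivita 3 1 c d * extd1 (codiff F) c d x := by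
    rw [hL, hE']
    simp only [Fin.sum_univ_four,
        lc0123, lc0132, lc0213, lc0231, lc0312, lc0321, lc1023, lc1032, lc1203, lc1230,
        lc1302, lc1320, lc2013, lc2031, lc2103, lc2130, lc2301, lc2310, lc3012, lc3021,
        lc3102, lc3120, lc3201, lc3210, lc_dup01, lc_dup02, lc_dup03, lc_dup12, lc_dup13,
        lc_dup23, hS01, hS02, hS03, hA01, hA02, hA03, hA23, hA13, hA12, hii,
        hY10, hY20, hY21, hY30, hY31, hY32]
    ring
  have hc32 : codiff3 (extd2 F) 3 2 x =
      (1 / 2) * ∑ c, ∑ d, leviCivita 3 2 c d * extd1 (codiff F) c d x := by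
    rw [hL, hE']
    simp only [Fin.sum_univ_four,
        lc0123, lc0132, lc0213, lc0231, lc0312, lc0321, lc1023, lc1032, lc1203, lc1230,
        lc1302, lc1320, lc2013, lc2031, lc2103, lc2130, lc2301, lc2310, lc3012, lc3021,
        lc3102, lc3120, lc3201, lc3210, lc_dup01, lc_dup02, lc_dup03, lc_dup12, lc_dup13,
        lc_dup23, hS01, hS02, hS03, hA01, hA02, hA03, hA23, hA13, hA12, hii,
        hY10, hY20, hY21, hY30, hY31, hY32]
    ring
  have hc33 : codiff3 (extd2 F) 3 3 x =
      (1 / 2) * ∑ c, ∑ d, leviCivita 3 3 c d * extd1 (codiff F) c d x := by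
    rw [hL, hE']
    simp only [Fin.sum_univ_four,
        lc0123, lc0132, lc0213, lc0231, lc0312, lc0321, lc1023, lc1032, lc1203, lc1230,
        lc1302, lc1320, lc2013, lc2031, lc2103, lc2130, lc2301, lc2310, lc3012, lc3021,
        lc3102, lc3120, lc3201, lc3210, lc_dup01, lc_dup02, lc_dup03, lc_dup12, lc_dup13,
        lc_dup23, hS01, hS02, hS03, hA01, hA02, hA03, hA23, hA13, hA12, hii,
        hY10, hY20, hY21, hY30, hY31, hY32]
    ring
  fin_cases a <;> fin_cases b
  · exact hc00
  · exact hc01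
  · exact hc02
  · exact hc03
  · exact hc10
  · exact hc11
  · exact hc12
  · exact hc13
  · exact hc20
  · exact hc21
  · exact hc22
  · exact hc23
  · exact hc30
  · exact hc31
  · exact hc32
  · exact hc33
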